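/- Let R be a commutative ring and E an R-module such that R has finite projective dimension as an R⋉E-module. If M is a Gorenstein projective R⋉E-module, then Tor_i^{R⋉E}(M, R) = 0 for all i > 0. -/

import Mathlib

open CategoryTheory TrivSqZeroExt

noncomputable section

universe u

/-- The canonical projection `ε : R⋉E → R`, `ε (r, e) = r`. -/
def paperEps (R E : Type u) [CommRing R] [AddCommGroup E] [Module R E]
    [Module Rᵐᵒᵖ E] [IsCentralScalar R E] : TrivSqZeroExt R E →+* R :=
  (TrivSqZeroExt.fstHom R R E).toRingHom

/-- `M` has a left resolution of length `≤ n` by modules satisfying `P`. -/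
def HasLeftResLE (R : Type u) [CommRing R] (P : ModuleCat.{u} R → Prop)
    (M : Type u) [AddCommGroup M] [Module R M] (n : ℕ) : Prop :=
  ∃ (G : ℕ → ModuleCat.{u} R) (d : ∀ i, G (i + 1) ⟶ G i) (aug : G 0 ⟶ ModuleCat.of R M),
    (∀ i, P (G i)) ∧ (∀ i, n < i → Subsingleton (G i)) ∧
    Function.Surjective aug ∧ Function.Exact (d 0) aug ∧
    ∀ i, Function.Exact (d (i + 1)) (d i)

/-- `M` has a right (co)resolution of length `≤ n` by modules satisfying `P`. -/
def HasRightResLE (R : Type u) [CommRing R] (P : ModuleCat.{u} R → Prop)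
    (M : Type u) [AddCommGroup M] [Module R M] (n : ℕ) : Prop :=
  ∃ (G : ℕ → ModuleCat.{u} R) (d : ∀ i, G i ⟶ G (i + 1)) (aug : ModuleCat.of R M ⟶ G 0),
    (∀ i, P (G i)) ∧ (∀ i, n < i → Subsingleton (G i)) ∧
    Function.Injective aug ∧ Function.Exact aug (d 0) ∧
    ∀ i, Function.Exact (d i) (d (i + 1))

/-- Projective dimension of `M` over `R`, as an element of `ℕ∞`. -/
def projDim (R : Type u) [CommRing R] (M : Type u) [AddCommGroup M] [Module R M] : ℕ∞ :=
  sInf ((fun n : ℕ => (n : ℕ∞)) '' {n : ℕ | HasLeftResLE R (fun N => Module.Projective R N) M n})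

/-- Flat dimension of `M` over `R`, as an element of `ℕ∞`. -/
def flatDim (R : Type u) [CommRing R] (M : Type u) [AddCommGroup M] [Module R M] : ℕ∞ :=
  sInf ((fun n : ℕ => (n : ℕ∞)) '' {n : ℕ | HasLeftResLE R (fun N => Module.Flat R N) M n})

/-- Injective dimension of `M` over `R`, as an element of `ℕ∞`. -/
def injDim (R : Type u) [CommRing R] (M : Type u) [AddCommGroup M] [Module R M] : ℕ∞ :=
  sInf ((fun n : ℕ => (n : ℕ∞)) '' {n : ℕ | HasRightResLE R (fun N => Module.Injective R N) M n})

/-- `M` is Gorenstein projective over `R`: it is a syzygy of a complete projective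
resolution, i.e. an exact complex of projectives which stays exact under
`Hom(-, Q)` for every projective `Q`. -/
def IsGorensteinProjective (R : Type u) [CommRing R]
    (M : Type u) [AddCommGroup M] [Module R M] : Prop :=
  ∃ (P : ℤ → ModuleCat.{u} R) (d : ∀ i : ℤ, P (i + 1) ⟶ P i),
    (∀ i, Module.Projective R (P i)) ∧
    (∀ i, Function.Exact (d (i + 1)) (d i)) ∧
    (∀ Q : ModuleCat.{u} R, Module.Projective R Q →
      ∀ i : ℤ, Function.Exact (LinearMap.lcomp R Q (d i).hom) (LinearMap.lcomp R Q (d (i + 1)).hom)) ∧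
    Nonempty (M ≃ₗ[R] LinearMap.range (d 0).hom)

/-- Gorenstein projective dimension of `M` over `R`, as an element of `ℕ∞`. -/
def gprojDim (R : Type u) [CommRing R] (M : Type u) [AddCommGroup M] [Module R M] : ℕ∞ :=
  sInf ((fun n : ℕ => (n : ℕ∞)) '' {n : ℕ | HasLeftResLE R (fun N => IsGorensteinProjective R N) M n})

/-- Gorenstein global dimension of `R`: the supremum of the Gorenstein projective
dimensions of all `R`-modules. -/
def Ggldim (R : Type u) [CommRing R] : ℕ∞ :=
  ⨆ M : ModuleCat.{u} R, gprojDim R M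

/-! Let `Z j` be the image of `d j` in a complete projective resolution `P` of `M = Z 0`, and `K`
a projective resolution of `N` of length `n`. Since `K` is degreewise flat, tensoring the short
exact sequences `0 → Z (k + 1) → P (k + 1) → Z k → 0` with `K` gives short exact sequences of
complexes, and `P (k + 1) ⊗ K` is exact in positive degrees. The long exact homology sequence
then shows that `H_{i+1}(Z k ⊗ K) = 0` implies `H_i(Z (k + 1) ⊗ K) = 0` for `i ≥ 1`. After `n`
such shifts the degree exceeds `n`, where `K` vanishes; hence `Tor_i(Z j, N) = H_i(Z j ⊗ K) = 0`
for `i > 0`. -/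

open Limits MonoidalCategory

section

variable {C : Type*} [Category C] [Preadditive C] [MonoidalCategory C] [MonoidalPreadditive C]
  {ι : Type*} {c : ComplexShape ι}

@[simps]
def HomologicalComplex.tensorLeftFunctor (K : HomologicalComplex C c) :
    C ⥤ HomologicalComplex C c where
  obj X := ((tensorLeft X).mapHomologicalComplex c).obj K
  map f := (NatTrans.mapHomologicalComplex ((tensoringLeft C).map f) c).app K

instance (K : HomologicalComplex C c) : K.tensorLeftFunctor.Additive where
  map_add := by
    intros
    ext
    simp only [HomologicalComplex.tensorLeftFunctor_map, NatTrans.mapHomologicalComplex,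
      Functor.map_add, NatTrans.app_add]
    rfl

end

section

variable {A : Type u} [CommRing A] {ι : Type*} {c : ComplexShape ι}

lemma HomologicalComplex.ExactAt.tensorLeft {K : HomologicalComplex (ModuleCat.{u} A) c} {i : ι}
    (hK : K.ExactAt i) (X : ModuleCat.{u} A) [Module.Flat A X] :
    (K.tensorLeftFunctor.obj X).ExactAt i :=
  hK.map (MonoidalCategory.tensorLeft X)

lemma CategoryTheory.ShortComplex.ShortExact.map_tensorLeftFunctor
    (K : HomologicalComplex (ModuleCat.{u} A) c) {S : ShortComplex (ModuleCat.{u} A)}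
    (hS : S.ShortExact) (hK : ∀ i, Module.Flat A (K.X i)) :
    (S.map K.tensorLeftFunctor).ShortExact :=
  HomologicalComplex.shortExact_of_degreewise_shortExact _ fun i =>
    have := hK i
    hS.map_of_exact (tensorRight (K.X i))

lemma HomologicalComplex.isZero_homology_tensorLeft_of_shortExact
    (K : HomologicalComplex (ModuleCat.{u} A) c) (hK : ∀ i, Module.Flat A (K.X i))
    {S : ShortComplex (ModuleCat.{u} A)} (hS : S.ShortExact) (hS₂ : Module.Flat A S.X₂)
    {i j : ι} (hij : c.Rel j i) (hKi : K.ExactAt i)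
    (h₃ : IsZero ((K.tensorLeftFunctor.obj S.X₃).homology j)) :
    IsZero ((K.tensorLeftFunctor.obj S.X₁).homology i) :=
  ((hS.map_tensorLeftFunctor K hK).homology_exact₁ j i hij).isZero_X₂
    (h₃.eq_of_src _ _) (((hKi.tensorLeft S.X₂).isZero_homology).eq_of_tgt _ _)

def ModuleCat.rangeShortComplex {X Y Z : ModuleCat.{u} A} {f : X ⟶ Y} {g : Y ⟶ Z}
    (h : Function.Exact f g) : ShortComplex (ModuleCat.{u} A) where
  X₁ := ModuleCat.of A (LinearMap.range f.hom)
  X₂ := Y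
  X₃ := ModuleCat.of A (LinearMap.range g.hom)
  f := ModuleCat.ofHom (LinearMap.range f.hom).subtype
  g := ModuleCat.ofHom g.hom.rangeRestrict
  zero := by
    ext ⟨_, x, rfl⟩
    exact h.apply_apply_eq_zero x

lemma ModuleCat.rangeShortComplex_shortExact {X Y Z : ModuleCat.{u} A} {f : X ⟶ Y} {g : Y ⟶ Z}
    (h : Function.Exact f g) : (ModuleCat.rangeShortComplex h).ShortExact := by
  refine .mk' ?_ ((ModuleCat.mono_iff_injective _).2 (Submodule.injective_subtype _))
    ((ModuleCat.epi_iff_surjective _).2 g.hom.surjective_rangeRestrict)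
  rw [ShortComplex.ShortExact.moduleCat_exact_iff_function_exact, LinearMap.exact_iff]
  exact (LinearMap.ker_rangeRestrict _).trans ((LinearMap.exact_iff.1 h).trans
    (Submodule.range_subtype _).symm)

lemma ChainComplex.isZero_homology_tensorLeft_range (K : ChainComplex (ModuleCat.{u} A) ℕ)
    (hK : ∀ i, Module.Flat A (K.X i)) (hKex : ∀ i, K.ExactAt (i + 1)) {n : ℕ}
    (hKn : ∀ i, n < i → IsZero (K.X i)) {P : ℤ → ModuleCat.{u} A}
    (d : ∀ i, P (i + 1) ⟶ P i) (hP : ∀ i, Module.Flat A (P i))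
    (hd : ∀ i, Function.Exact (d (i + 1)) (d i)) (j : ℤ) (i : ℕ) :
    IsZero ((K.tensorLeftFunctor.obj (ModuleCat.of A (LinearMap.range (d j).hom))).homology
      (i + 1)) := by
  suffices ∀ c j i, n < i + 1 + c → IsZero ((K.tensorLeftFunctor.obj
      (ModuleCat.of A (LinearMap.range (d j).hom))).homology (i + 1)) from this n j i (by omega)
  intro c
  induction c with
  | zero =>
    intro j i hi
    exact (HomologicalComplex.ExactAt.of_isZero
      ((tensorLeft _).map_isZero (hKn (i + 1) hi))).isZero_homology
  | succ c ih =>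
    intro j i hi
    obtain ⟨k, rfl⟩ : ∃ k, j = k + 1 := ⟨j - 1, by ring⟩
    exact K.isZero_homology_tensorLeft_of_shortExact hK
      (ModuleCat.rangeShortComplex_shortExact (hd k)) (hP (k + 1)) (by simp) (hKex i)
      (ih k (i + 1) (by omega))

lemma exists_hasLeftResLE_of_projDim_ne_top {N : Type u} [AddCommGroup N] [Module A N]
    (hN : projDim A N ≠ ⊤) : ∃ n, HasLeftResLE A (fun N => Module.Projective A N) N n := by
  by_contra! h
  exact hN (by simpa [projDim] using h)

lemma HasLeftResLE.exists_projectiveResolution {N : Type u} [AddCommGroup N] [Module A N]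
    {n : ℕ} (h : HasLeftResLE A (fun N => Module.Projective A N) N n) :
    ∃ P : ProjectiveResolution (ModuleCat.of A N), ∀ i, n < i → IsZero (P.complex.X i) := by
  obtain ⟨G, d, aug, hG, hGn, haug, hex₀, hex⟩ := h
  let K := ChainComplex.of G d fun i =>
    ModuleCat.hom_ext (LinearMap.ext (hex i).apply_apply_eq_zero)
  have hd : ∀ i, K.d (i + 1) i = d i := ChainComplex.of_d G d
  have hKex : ∀ i, K.ExactAt (i + 1) := fun i => by
    rw [K.exactAt_iff' (i + 2) (i + 1) i (by simp) (by simp),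
      ShortComplex.ShortExact.moduleCat_exact_iff_function_exact]
    change Function.Exact (K.d (i + 2) (i + 1)) (K.d (i + 1) i)
    rw [hd, hd]
    exact hex i
  let π : K ⟶ (ChainComplex.single₀ _).obj (ModuleCat.of A N) :=
    (ChainComplex.toSingle₀Equiv K _).symm
      ⟨aug, hd 0 ▸ ModuleCat.hom_ext (LinearMap.ext hex₀.apply_apply_eq_zero)⟩
  have hπ : π.f 0 = aug := ChainComplex.toSingle₀Equiv_symm_apply_f_zero _ _
  have hqis : QuasiIso π := ⟨fun
    | 0 => by
      rw [ChainComplex.quasiIsoAt₀_iff, ShortComplex.quasiIso_iff_of_zeros' _ rfl rfl rfl]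
      refine ⟨?_, ?_⟩
      · rw [ShortComplex.ShortExact.moduleCat_exact_iff_function_exact]
        change Function.Exact (K.d 1 0) (π.f 0)
        rwa [hd, hπ]
      · change Epi (π.f 0)
        rw [hπ]
        exact (ModuleCat.epi_iff_surjective aug).2 haug
    | i + 1 => (quasiIsoAt_iff_exactAt' π (i + 1) (ChainComplex.exactAt_succ_single_obj _ i)).2
        (hKex i)⟩
  exact ⟨⟨K, fun i => (IsProjective.iff_projective _).1 (hG i), π, hqis⟩,
    fun i hi => have := hGn i hi; ModuleCat.isZero_of_subsingleton _⟩

theorem IsGorensteinProjective.isZero_Tor {M N : Type u}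
    [AddCommGroup M] [Module A M] [AddCommGroup N] [Module A N]
    (hM : IsGorensteinProjective A M) (hN : projDim A N ≠ ⊤) {i : ℕ} (hi : 0 < i) :
    IsZero (((Tor (ModuleCat.{u} A) i).obj (ModuleCat.of A M)).obj (ModuleCat.of A N)) := by
  obtain ⟨n, hn⟩ := exists_hasLeftResLE_of_projDim_ne_top hN
  obtain ⟨Q, hQn⟩ := hn.exists_projectiveResolution
  obtain ⟨P, d, hP, hd, -, ⟨e⟩⟩ := hM
  obtain ⟨i, rfl⟩ : ∃ k, i = k + 1 := ⟨i - 1, by omega⟩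
  have hQ : ∀ j, Module.Flat A (Q.complex.X j) := fun j =>
    have := (IsProjective.iff_projective _).2 (Q.projective j)
    inferInstance
  have hZ := Q.complex.isZero_homology_tensorLeft_range hQ Q.complex_exactAt_succ hQn d
    (fun j => have := hP j; inferInstance) hd 0 i
  exact (hZ.of_iso ((HomologicalComplex.homologyFunctor _ _ _).mapIso
    (Q.complex.tensorLeftFunctor.mapIso e.toModuleIso))).of_iso
    (Q.isoLeftDerivedObj (tensorLeft (ModuleCat.of A M)) (i + 1))

end

theorem stmt13 (R E : Type u) [CommRing R] [AddCommGroup E] [Module R E]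
    [Module Rᵐᵒᵖ E] [IsCentralScalar R E]
    (M : Type u) [AddCommGroup M] [Module (TrivSqZeroExt R E) M] :
    letI : Module (TrivSqZeroExt R E) R := Module.compHom R (paperEps R E)
    projDim (TrivSqZeroExt R E) R ≠ ⊤ →
    IsGorensteinProjective (TrivSqZeroExt R E) M →
    ∀ i : ℕ, 0 < i →
      Limits.IsZero (((Tor (ModuleCat.{u} (TrivSqZeroExt R E)) i).obj
        (ModuleCat.of (TrivSqZeroExt R E) M)).obj
        (ModuleCat.of (TrivSqZeroExt R E) R)) :=
  letI : Module (TrivSqZeroExt R E) R := Module.compHom R (paperEps R E)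
  fun hR hM _ hi => hM.isZero_Tor hR hi
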